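/- arXiv:1507.00240 — 2 statements merged into one kernel-verified Lean document; each statement's English description precedes it below -/
import Mathlib

section
/- Let (x,y,z) be random variables such that x → y → z and x → {x≠y} → y. Then (x, 1_{x≠y}) → y → z also holds, i.e., p(x, 1_{x≠y}, z | y) = p(x, 1_{x≠y} | y)·p(z | y). -/
open scoped Classical

/-- Probability of an event under a weight function on a finite sample space. -/
noncomputable def pr {Ω : Type*} [Fintype Ω] (μ : Ω → ℝ) (E : Ω → Prop) : ℝ :=
  ∑ ω, if E ω then μ ω else 0

lemma pr_congr {Ω : Type*} [Fintype Ω] (μ : Ω → ℝ) {E F : Ω → Prop}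
    (h : ∀ ω, E ω ↔ F ω) : pr μ E = pr μ F := by
  unfold pr; exact Finset.sum_congr rfl fun ω _ => by simp [h ω]

lemma pr_false {Ω : Type*} [Fintype Ω] (μ : Ω → ℝ) {E : Ω → Prop}
    (h : ∀ ω, ¬ E ω) : pr μ E = 0 := by
  unfold pr; exact Finset.sum_eq_zero fun ω _ => by simp [h ω]

theorem stmt5 {Ω V : Type*} [Fintype Ω]
    (μ : Ω → ℝ) (hμ0 : ∀ ω, 0 ≤ μ ω) (hμ1 : ∑ ω, μ ω = 1)
    (x y z : Ω → V)
    (hxyz : ∀ y₀ : V, 0 < pr μ (fun ω => y ω = y₀) → ∀ x₀ z₀ : V,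
      pr μ (fun ω => x ω = x₀ ∧ z ω = z₀ ∧ y ω = y₀) * pr μ (fun ω => y ω = y₀)
        = pr μ (fun ω => x ω = x₀ ∧ y ω = y₀) * pr μ (fun ω => z ω = z₀ ∧ y ω = y₀))
    (hΛ : 0 < pr μ (fun ω => x ω ≠ y ω))
    (hxy : ∀ x₀ y₀ : V,
      pr μ (fun ω => x ω = x₀ ∧ y ω = y₀ ∧ x ω ≠ y ω) * pr μ (fun ω => x ω ≠ y ω)
        = pr μ (fun ω => x ω = x₀ ∧ x ω ≠ y ω) * pr μ (fun ω => y ω = y₀ ∧ x ω ≠ y ω)) :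
    ∀ y₀ : V, 0 < pr μ (fun ω => y ω = y₀) → ∀ (x₀ : V) (b : Bool) (z₀ : V),
      pr μ (fun ω => x ω = x₀ ∧ ((x ω ≠ y ω) ↔ b = true) ∧ z ω = z₀ ∧ y ω = y₀)
          * pr μ (fun ω => y ω = y₀)
        = pr μ (fun ω => x ω = x₀ ∧ ((x ω ≠ y ω) ↔ b = true) ∧ y ω = y₀)
          * pr μ (fun ω => z ω = z₀ ∧ y ω = y₀) := by
  intro y₀ hy x₀ b z₀
  by_cases h : (x₀ ≠ y₀) ↔ (b = true)
  · have e1 : pr μ (fun ω => x ω = x₀ ∧ ((x ω ≠ y ω) ↔ b = true) ∧ z ω = z₀ ∧ y ω = y₀)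
        = pr μ (fun ω => x ω = x₀ ∧ z ω = z₀ ∧ y ω = y₀) := by
      apply pr_congr
      intro ω
      constructor
      · rintro ⟨h1, _, h3, h4⟩; exact ⟨h1, h3, h4⟩
      · rintro ⟨h1, h3, h4⟩
        exact ⟨h1, by rw [h1, h4]; exact h, h3, h4⟩
    have e2 : pr μ (fun ω => x ω = x₀ ∧ ((x ω ≠ y ω) ↔ b = true) ∧ y ω = y₀)
        = pr μ (fun ω => x ω = x₀ ∧ y ω = y₀) := by
      apply pr_congr
      intro ω
      constructor
      · rintro ⟨h1, _, h4⟩; exact ⟨h1, h4⟩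
      · rintro ⟨h1, h4⟩
        exact ⟨h1, by rw [h1, h4]; exact h, h4⟩
    rw [e1, e2]
    exact hxyz y₀ hy x₀ z₀
  · have e1 : pr μ (fun ω => x ω = x₀ ∧ ((x ω ≠ y ω) ↔ b = true) ∧ z ω = z₀ ∧ y ω = y₀) = 0 := by
      apply pr_false
      rintro ω ⟨h1, h2, _, h4⟩
      exact h (by rw [← h1, ← h4]; exact h2)
    have e2 : pr μ (fun ω => x ω = x₀ ∧ ((x ω ≠ y ω) ↔ b = true) ∧ y ω = y₀) = 0 := by
      apply pr_false
      rintro ω ⟨h1, h2, h4⟩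
      exact h (by rw [← h1, ← h4]; exact h2)
    rw [e1, e2, zero_mul, zero_mul]
end

section
/- Let ŝ, s̃, s be random variables on a finite probability space with values in S ∪ {⊥}, and let y, ŷ be auxiliary random variables such that s = Extr(y, c) and s̃ = Extr(ŷ, c) for a function Extr and random variable c, where for every c and every s⁎ ∈ S there is at most one y with Extr(y,c) = s⁎. Suppose p(ŝ ≠ s̃ ∧ s̃ = s⁎) ≤ ε for all s⁎, and p(y ≠ ŷ ∧ y = y⁎(c)) ≤ δ for every function y⁎ of c. Then for every fixed s⁎ ∈ S, p(ŝ ≠ s ∧ s = s⁎) ≤ ε + δ. -/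
open scoped Classical

lemma pr_mono {Ω : Type*} [Fintype Ω] (μ : Ω → ℝ) (hμ0 : ∀ ω, 0 ≤ μ ω)
    {E F : Ω → Prop} (h : ∀ ω, E ω → F ω) : pr μ E ≤ pr μ F := by
  apply Finset.sum_le_sum
  intro ω _
  by_cases hE : E ω
  · simp [hE, h ω hE]
  · simp only [hE, if_false]
    split <;> simp [hμ0 ω]

lemma pr_union_le {Ω : Type*} [Fintype Ω] (μ : Ω → ℝ) (hμ0 : ∀ ω, 0 ≤ μ ω)
    (A B : Ω → Prop) : pr μ (fun ω => A ω ∨ B ω) ≤ pr μ A + pr μ B := by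
  unfold pr
  rw [← Finset.sum_add_distrib]
  apply Finset.sum_le_sum
  intro ω _
  by_cases hA : A ω <;> by_cases hB : B ω <;> simp [hA, hB, hμ0 ω]

theorem stmt19 {Ω S Y C : Type*} [Fintype Ω] [Nonempty Y]
    (μ : Ω → ℝ) (hμ0 : ∀ ω, 0 ≤ μ ω) (hμ1 : ∑ ω, μ ω = 1)
    (shat stilde s : Ω → Option S) (y yhat : Ω → Y) (c : Ω → C)
    (Extr : Y → C → Option S)
    (hs : ∀ ω, s ω = Extr (y ω) (c ω))
    (hstilde : ∀ ω, stilde ω = Extr (yhat ω) (c ω))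
    (hinj : ∀ (cc : C) (t : S) (y₁ y₂ : Y),
      Extr y₁ cc = some t → Extr y₂ cc = some t → y₁ = y₂)
    (ε δ : ℝ)
    (hε : ∀ t : S, pr μ (fun ω => shat ω ≠ stilde ω ∧ stilde ω = some t) ≤ ε)
    (hδ : ∀ g : C → Y, pr μ (fun ω => y ω ≠ yhat ω ∧ y ω = g (c ω)) ≤ δ) :
    ∀ t : S, pr μ (fun ω => shat ω ≠ s ω ∧ s ω = some t) ≤ ε + δ := by
  intro t
  set g : C → Y := fun cc =>
    if h : ∃ y₀, Extr y₀ cc = some t then h.choose else Classical.arbitrary Y with hg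
  calc pr μ (fun ω => shat ω ≠ s ω ∧ s ω = some t)
      ≤ pr μ (fun ω => (shat ω ≠ stilde ω ∧ stilde ω = some t) ∨
          (y ω ≠ yhat ω ∧ y ω = g (c ω))) := by
        apply pr_mono μ hμ0
        intro ω ⟨hne, hst⟩
        by_cases heq : stilde ω = s ω
        · left; exact ⟨by rw [heq]; exact hne, heq.trans hst⟩
        · right
          have hey : Extr (y ω) (c ω) = some t := (hs ω) ▸ hst
          constructor
          · intro hyy
            exact heq (by rw [hstilde ω, ← hyy, ← hs ω])
          · have hex : ∃ y₀, Extr y₀ (c ω) = some t := ⟨y ω, hey⟩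
            rw [hg]
            simp only [hex, dif_pos]
            exact hinj (c ω) t (y ω) hex.choose hey hex.choose_spec
    _ ≤ ε + δ := le_trans (pr_union_le μ hμ0 _ _) (add_le_add (hε t) (hδ g))
end
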